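/- Let 𝓐=(A,δ^A,σ^A,τ^A) and 𝓑=(B,δ^B,σ^B,τ^B) be fuzzy automata over a complete residuated lattice 𝓛 and alphabet X, let E be a fuzzy equivalence relation that is a forward bisimulation on 𝓐 and F a fuzzy equivalence relation that is a backward bisimulation on 𝓑. Then there exists a uniform fuzzy relation φ between A and B that is a backward-forward bisimulation with E_A^φ = E and E_B^φ = F if and only if there exists an isomorphism ϕ:𝓐/E→𝓑/F of the factor fuzzy automata such that Ẽ(E_{a₁},E_{a₂}) = F̃(ϕ(E_{a₁}),ϕ(E_{a₂})) for all a₁,a₂∈A. -/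
import Mathlib


universe u

/-- A complete residuated lattice: a complete lattice with a commutative monoid
structure whose unit is the top element, together with a residuum operation
forming an adjoint pair with the multiplication. -/
class CompleteResiduatedLattice (L : Type*) extends CompleteLattice L, CommMonoid L where
  /-- the residuum operation `→` -/
  res : L → L → L
  /-- the adjunction property -/
  adjunction : ∀ x y z : L, x * y ≤ z ↔ x ≤ res y z
  /-- the multiplicative unit `1` is the greatest element -/
  one_eq_top : (1 : L) = ⊤

namespace FuzzyAutomataBisim

/-- A fuzzy automaton over `L` and alphabet `X`, with state set `A`. -/
structure FuzzyAutomaton (L : Type*) [CompleteResiduatedLattice L] (X A : Type*) where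
  δ : A → X → A → L
  σ : A → L
  τ : A → L

variable {L X A B C : Type*} [CompleteResiduatedLattice L]

/-- biresiduum `x ↔ y = (x → y) ⊓ (y → x)` -/
def bires (x y : L) : L :=
  CompleteResiduatedLattice.res x y ⊓ CompleteResiduatedLattice.res y x

/-- inverse of a fuzzy relation -/
def inv (φ : A → B → L) : B → A → L := fun b a => φ a b

/-- composition of fuzzy relations -/
def rcomp (φ : A → B → L) (ψ : B → C → L) : A → C → L := fun a c => ⨆ b, φ a b * ψ b c

/-- composition of a fuzzy set with a fuzzy relation -/
def scomp (f : A → L) (φ : A → B → L) : B → L := fun b => ⨆ a, f a * φ a b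

/-- composition of a fuzzy relation with a fuzzy set -/
def rscomp (φ : A → B → L) (g : B → L) : A → L := fun a => ⨆ b, φ a b * g b

/-- degree of overlapping of two fuzzy sets -/
def sdot (f g : A → L) : L := ⨆ a, f a * g a

/-- kernel `E_A^φ` of a fuzzy relation -/
def ker (φ : A → B → L) : A → A → L := fun a₁ a₂ => ⨅ b, bires (φ a₁ b) (φ a₂ b)

/-- co-kernel `E_B^φ` of a fuzzy relation -/
def coker (φ : A → B → L) : B → B → L := fun b₁ b₂ => ⨅ a, bires (φ a b₁) (φ a b₂)

/-- `φ` is an `L`-function -/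
def IsLFun (φ : A → B → L) : Prop := ∀ a, ∃ b, φ a b = 1

/-- `φ` is surjective, i.e. `φ⁻¹` is an `L`-function -/
def IsSurj (φ : A → B → L) : Prop := ∀ b, ∃ a, φ a b = 1

/-- `φ` is a partial fuzzy function: `φ ∘ φ⁻¹ ∘ φ ≤ φ` -/
def IsPFF (φ : A → B → L) : Prop := rcomp (rcomp φ (inv φ)) φ ≤ φ

/-- `φ` is a uniform fuzzy relation: a partial fuzzy function that is a
surjective `L`-function -/
def IsUniform (φ : A → B → L) : Prop := IsPFF φ ∧ IsLFun φ ∧ IsSurj φ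

/-- the set of crisp descriptions of `φ` -/
def CR (φ : A → B → L) : Set (A → B) := {ψ | ∀ a, φ a (ψ a) = 1}

/-- `ψ : A → B` is `F`-surjective -/
def SurjMod (F : B → B → L) (ψ : A → B) : Prop := ∀ b, ∃ a, F (ψ a) b = 1

/-- fuzzy equivalence relation -/
structure IsFuzzyEquiv (E : A → A → L) : Prop where
  refl : ∀ a, E a a = 1
  symm : ∀ a b, E a b = E b a
  trans : ∀ a b c, E a b * E b c ≤ E a c

/-- fuzzy equality -/
def IsFuzzyEquality (E : A → A → L) : Prop :=
  IsFuzzyEquiv E ∧ ∀ a b, E a b = 1 → a = b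

/-- the factor set `A/E = {E_a : a ∈ A}` -/
abbrev FactorSet (E : A → A → L) := {f : A → L // ∃ a, E a = f}

/-- the class `E_a` as an element of `A/E` -/
def toClass (E : A → A → L) (a : A) : FactorSet E := ⟨E a, a, rfl⟩

/-- a chosen representative of a class -/
noncomputable def rep {E : A → A → L} (c : FactorSet E) : A := c.2.choose

/-- the fuzzy relation `Ẽ` on `A/E` -/
noncomputable def tildeRel (E : A → A → L) : FactorSet E → FactorSet E → L :=
  fun c c' => E (rep c) (rep c')

open Classical in
/-- a chosen crisp description of `φ` -/
noncomputable def crispDesc [Nonempty B] (φ : A → B → L) : A → B :=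
  fun a => if h : ∃ b, φ a b = 1 then h.choose else Classical.arbitrary B

/-- the induced map `φ̃ : A/E_A^φ → B/E_B^φ`, `φ̃(E_a) = F_{ψ(a)}` -/
noncomputable def tilde [Nonempty B] (φ : A → B → L) :
    FactorSet (ker φ) → FactorSet (coker φ) :=
  fun c => toClass (coker φ) (crispDesc φ (rep c))

/-- the fuzzy transition relation `δ_x` -/
def FuzzyAutomaton.δx (M : FuzzyAutomaton L X A) (x : X) : A → A → L := fun a b => M.δ a x b

open Classical in
/-- transitions extended to words -/
noncomputable def deltaWord (M : FuzzyAutomaton L X A) : List X → A → A → L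
  | [] => fun a b => if a = b then (1 : L) else ⊥
  | x :: u => rcomp (M.δx x) (deltaWord M u)

/-- the fuzzy language recognized by `M` : `L(M)(u) = σ ∘ δ_u ∘ τ` -/
noncomputable def lang (M : FuzzyAutomaton L X A) (u : List X) : L :=
  sdot (scomp M.σ (deltaWord M u)) M.τ

/-- forward simulation -/
def IsForwardSim (MA : FuzzyAutomaton L X A) (MB : FuzzyAutomaton L X B)
    (φ : A → B → L) : Prop :=
  MA.σ ≤ scomp MB.σ (inv φ) ∧
  (∀ x, rcomp (inv φ) (MA.δx x) ≤ rcomp (MB.δx x) (inv φ)) ∧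
  rscomp (inv φ) MA.τ ≤ MB.τ

/-- backward simulation -/
def IsBackwardSim (MA : FuzzyAutomaton L X A) (MB : FuzzyAutomaton L X B)
    (φ : A → B → L) : Prop :=
  scomp MA.σ φ ≤ MB.σ ∧
  (∀ x, rcomp (MA.δx x) φ ≤ rcomp φ (MB.δx x)) ∧
  MA.τ ≤ rscomp φ MB.τ

/-- forward bisimulation -/
def IsForwardBisim (MA : FuzzyAutomaton L X A) (MB : FuzzyAutomaton L X B)
    (φ : A → B → L) : Prop :=
  IsForwardSim MA MB φ ∧ IsForwardSim MB MA (inv φ)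

/-- backward bisimulation -/
def IsBackwardBisim (MA : FuzzyAutomaton L X A) (MB : FuzzyAutomaton L X B)
    (φ : A → B → L) : Prop :=
  IsBackwardSim MA MB φ ∧ IsBackwardSim MB MA (inv φ)

/-- backward-forward bisimulation -/
def IsBFBisim (MA : FuzzyAutomaton L X A) (MB : FuzzyAutomaton L X B)
    (φ : A → B → L) : Prop :=
  IsBackwardSim MA MB φ ∧ IsForwardSim MB MA (inv φ)

/-- forward-backward bisimulation -/
def IsFBBisim (MA : FuzzyAutomaton L X A) (MB : FuzzyAutomaton L X B)
    (φ : A → B → L) : Prop :=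
  IsForwardSim MA MB φ ∧ IsBackwardSim MB MA (inv φ)

/-- isomorphism of fuzzy automata -/
def IsIso (MA : FuzzyAutomaton L X A) (MB : FuzzyAutomaton L X B) (h : A → B) : Prop :=
  Function.Bijective h ∧
  (∀ (a₁ : A) (x : X) (a₂ : A), MA.δ a₁ x a₂ = MB.δ (h a₁) x (h a₂)) ∧
  (∀ a, MA.σ a = MB.σ (h a)) ∧
  (∀ a, MA.τ a = MB.τ (h a))

/-- the factor fuzzy automaton `𝓐/E` -/
noncomputable def factorAut (M : FuzzyAutomaton L X A) (E : A → A → L) :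
    FuzzyAutomaton L X (FactorSet E) where
  δ := fun c x c' => rcomp (rcomp E (M.δx x)) E (rep c) (rep c')
  σ := fun c => scomp M.σ E (rep c)
  τ := fun c => rscomp E M.τ (rep c)

/-- the natural fuzzy relation `φ(a₁, E_{a₂}) = E(a₁,a₂)` between `A` and `A/E` -/
def natRel (E : A → A → L) : A → FactorSet E → L := fun a c => c.1 a

/-- the fuzzy relation `G/E` on `A/E` -/
noncomputable def quotRel (E G : A → A → L) : FactorSet E → FactorSet E → L :=
  fun c c' => G (rep c) (rep c')

/-- the fuzzy relation `φ(a₁, E_{a₂}) = G(a₁,a₂)` between `A` and `A/E` -/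
noncomputable def quotNatRel (E G : A → A → L) : A → FactorSet E → L :=
  fun a c => G a (rep c)

/-- UFB-equivalence of fuzzy automata -/
def UFBEquiv (MA : FuzzyAutomaton L X A) (MB : FuzzyAutomaton L X B) : Prop :=
  ∃ φ : A → B → L, IsUniform φ ∧ IsForwardBisim MA MB φ

/-! ### Auxiliary lemmas -/

section Basics
open CompleteResiduatedLattice

lemma adj {x y z : L} : x * y ≤ z ↔ x ≤ res y z := adjunction x y z

lemma le_one'' (x : L) : x ≤ 1 := by
  rw [one_eq_top (L := L)]; exact le_top

lemma mul_le_mul_r' {x y : L} (h : x ≤ y) (z : L) : x * z ≤ y * z :=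
  adj.mpr (h.trans (adj.mp le_rfl))

lemma mul_le_mul_l' {x y : L} (h : x ≤ y) (z : L) : z * x ≤ z * y := by
  rw [mul_comm z x, mul_comm z y]; exact mul_le_mul_r' h z

lemma mul_mono' {x x' y y' : L} (hx : x ≤ x') (hy : y ≤ y') : x * y ≤ x' * y' :=
  (mul_le_mul_r' hx y).trans (mul_le_mul_l' hy x')

lemma res_eq_one {x y : L} (h : x ≤ y) : res x y = 1 :=
  le_antisymm (le_one'' _) (adj.mp (by rwa [one_mul]))

lemma res_one_left' (y : L) : res 1 y = y := by
  apply le_antisymm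
  · have h : res 1 y * 1 ≤ y := adj.mpr le_rfl
    rwa [mul_one] at h
  · exact adj.mp (by rw [mul_one])

lemma bires_self (x : L) : bires x x = 1 := by
  simp [bires, res_eq_one le_rfl]

lemma bires_one_left' (y : L) : bires 1 y = y := by
  rw [bires, res_one_left', res_eq_one (le_one'' y), inf_eq_left]
  exact le_one'' y

lemma bires_le_res (x y : L) : bires x y ≤ res x y := inf_le_left

lemma bires_le_res' (x y : L) : bires x y ≤ res y x := inf_le_right

lemma le_bires {a x y : L} (h1 : a * x ≤ y) (h2 : a * y ≤ x) : a ≤ bires x y :=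
  le_inf (adj.mp h1) (adj.mp h2)

lemma iSup_mul'' {ι : Sort*} (f : ι → L) (x : L) : (⨆ i, f i) * x = ⨆ i, f i * x :=
  le_antisymm (adj.mpr (iSup_le fun i => adj.mp (le_iSup (fun j => f j * x) i)))
    (iSup_le fun i => mul_le_mul_r' (le_iSup f i) x)

lemma mul_iSup'' {ι : Sort*} (x : L) (f : ι → L) : (x * ⨆ i, f i) = ⨆ i, x * f i := by
  rw [mul_comm, iSup_mul'']
  exact iSup_congr fun i => mul_comm _ _

end Basics
section Relations

lemma rcomp_assoc {D : Type*} (φ : A → B → L) (ψ : B → C → L) (χ : C → D → L) :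
    rcomp (rcomp φ ψ) χ = rcomp φ (rcomp ψ χ) := by
  funext a d
  simp only [rcomp, iSup_mul'', mul_iSup'', mul_assoc]
  exact iSup_comm

lemma rcomp_mono {φ φ' : A → B → L} {ψ ψ' : B → C → L} (h1 : φ ≤ φ') (h2 : ψ ≤ ψ') :
    rcomp φ ψ ≤ rcomp φ' ψ' := by
  intro a c
  exact iSup_le fun b => le_iSup_of_le b (mul_mono' (h1 a b) (h2 b c))

lemma IsFuzzyEquiv.eq_of_one {E : A → A → L} (hE : IsFuzzyEquiv E) {a b : A}
    (h : E a b = 1) : E a = E b := by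
  funext x
  have h1 : E a b * E b x ≤ E a x := hE.trans a b x
  have h2 : E b a * E a x ≤ E b x := hE.trans b a x
  rw [h, one_mul] at h1
  rw [hE.symm b a, h, one_mul] at h2
  exact le_antisymm h2 h1

set_option linter.unusedSectionVars false in
lemma rep_spec {E : A → A → L} (c : FactorSet E) : E (rep c) = c.1 := c.2.choose_spec

set_option linter.unusedSectionVars false in
lemma toClass_rep {E : A → A → L} (c : FactorSet E) : toClass E (rep c) = c :=
  Subtype.ext (rep_spec c)

lemma E_rep_toClass (E : A → A → L) (a : A) : E (rep (toClass E a)) = E a := rep_spec _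

lemma E_rep_rep {E : A → A → L} (hE : IsFuzzyEquiv E) (a₁ a₂ : A) :
    E (rep (toClass E a₁)) (rep (toClass E a₂)) = E a₁ a₂ := by
  rw [E_rep_toClass E a₁, hE.symm a₁ (rep (toClass E a₂)), E_rep_toClass E a₂, hE.symm a₂ a₁]

lemma ker_classes {F : B → B → L} (hF : IsFuzzyEquiv F) (u v : B) :
    (⨅ b, bires (F u b) (F v b)) = F u v := by
  apply le_antisymm
  · have h := iInf_le (fun b => bires (F u b) (F v b)) v
    rw [hF.refl v] at h
    exact h.trans ((bires_le_res' _ _).trans (res_one_left' _).le)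
  · refine le_iInf fun b => le_bires ?_ ?_
    · rw [hF.symm u v]; exact hF.trans v u b
    · exact hF.trans u v b

lemma inv_symm {E : A → A → L} (hE : IsFuzzyEquiv E) : inv E = E :=
  funext fun a => funext fun b => hE.symm b a

lemma rcomp_self {E : A → A → L} (hE : IsFuzzyEquiv E) : rcomp E E = E := by
  funext a c
  apply le_antisymm (iSup_le fun b => hE.trans a b c)
  exact le_iSup_of_le a (le_of_eq (by rw [hE.refl a, one_mul]))

lemma le_rcomp_l {E : A → A → L} (hE : IsFuzzyEquiv E) (d : A → C → L) : d ≤ rcomp E d := by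
  intro a c
  exact le_iSup_of_le a (le_of_eq (by rw [hE.refl a, one_mul]))

lemma le_rcomp_r {E : A → A → L} (hE : IsFuzzyEquiv E) (d : C → A → L) : d ≤ rcomp d E := by
  intro c a
  exact le_iSup_of_le a (le_of_eq (by rw [hE.refl a, mul_one]))

lemma scomp_congr {E : A → A → L} (hE : IsFuzzyEquiv E) (f : A → L) {u v : A}
    (huv : E u = E v) : scomp f E u = scomp f E v := by
  unfold scomp
  exact iSup_congr fun x => by rw [hE.symm x u, huv, hE.symm v x]

lemma rscomp_congr {E : A → A → L} {u v : A} (h : E u = E v) (g : A → L) :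
    rscomp E g u = rscomp E g v := by
  unfold rscomp; rw [h]

lemma EdE_congr {E : A → A → L} (hE : IsFuzzyEquiv E) (d : A → A → L) {u v u' v' : A}
    (h1 : E u = E v) (h2 : E u' = E v') :
    rcomp (rcomp E d) E u u' = rcomp (rcomp E d) E v v' := by
  unfold rcomp
  exact iSup_congr fun x => by rw [h1, hE.symm x u', h2, hE.symm v' x]

end Relations

section Normalize

variable {MA : FuzzyAutomaton L X A} {MB : FuzzyAutomaton L X B}

lemma fwd_EdE {E : A → A → L} (hE : IsFuzzyEquiv E)
    (hEfb : IsForwardBisim MA MA E) (x : X) :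
    rcomp (rcomp E (MA.δx x)) E = rcomp (MA.δx x) E := by
  have h2 : rcomp E (MA.δx x) ≤ rcomp (MA.δx x) E := by
    have h := hEfb.1.2.1 x
    rwa [inv_symm hE] at h
  apply le_antisymm
  · calc rcomp (rcomp E (MA.δx x)) E ≤ rcomp (rcomp (MA.δx x) E) E :=
        rcomp_mono h2 le_rfl
    _ = rcomp (MA.δx x) (rcomp E E) := rcomp_assoc _ _ _
    _ = rcomp (MA.δx x) E := by rw [rcomp_self hE]
  · exact rcomp_mono (le_rcomp_l hE _) le_rfl

lemma fwd_Etau {E : A → A → L} (hE : IsFuzzyEquiv E)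
    (hEfb : IsForwardBisim MA MA E) : rscomp E MA.τ = MA.τ := by
  apply le_antisymm
  · have h := hEfb.1.2.2
    rwa [inv_symm hE] at h
  · intro a
    exact le_iSup_of_le a (le_of_eq (by rw [hE.refl a, one_mul]))

lemma bwd_FdF {F : B → B → L} (hF : IsFuzzyEquiv F)
    (hFbb : IsBackwardBisim MB MB F) (x : X) :
    rcomp (rcomp F (MB.δx x)) F = rcomp F (MB.δx x) := by
  have h2 : rcomp (MB.δx x) F ≤ rcomp F (MB.δx x) := hFbb.1.2.1 x
  apply le_antisymm
  · calc rcomp (rcomp F (MB.δx x)) F = rcomp F (rcomp (MB.δx x) F) := rcomp_assoc _ _ _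
    _ ≤ rcomp F (rcomp F (MB.δx x)) := rcomp_mono le_rfl h2
    _ = rcomp (rcomp F F) (MB.δx x) := (rcomp_assoc _ _ _).symm
    _ = rcomp F (MB.δx x) := by rw [rcomp_self hF]
  · exact le_rcomp_r hF _

end Normalize
/-- the map `A → B` induced by a map between factor sets -/
noncomputable def hmap (E : A → A → L) {F : B → B → L}
    (ϕ : FactorSet E → FactorSet F) (a : A) : B :=
  rep (ϕ (toClass E a))

lemma iso_to_uniform (MA : FuzzyAutomaton L X A) (MB : FuzzyAutomaton L X B)
    (E : A → A → L) (F : B → B → L)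
    (hE : IsFuzzyEquiv E) (hEfb : IsForwardBisim MA MA E)
    (hF : IsFuzzyEquiv F) (hFbb : IsBackwardBisim MB MB F)
    (ϕ : FactorSet E → FactorSet F)
    (hiso : IsIso (factorAut MA E) (factorAut MB F) ϕ)
    (htilde : ∀ a₁ a₂ : A, tildeRel E (toClass E a₁) (toClass E a₂) =
        tildeRel F (ϕ (toClass E a₁)) (ϕ (toClass E a₂))) :
    ∃ φ : A → B → L, IsUniform φ ∧ IsBFBisim MA MB φ ∧ ker φ = E ∧ coker φ = F := by
  obtain ⟨hbij, hδ, hσ, hτ⟩ := hiso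
  set g : A → B := hmap E ϕ with hg
  have key : ∀ a₁ a₂, F (g a₁) (g a₂) = E a₁ a₂ := by
    intro a₁ a₂
    have ht := htilde a₁ a₂
    unfold tildeRel at ht
    rw [E_rep_rep hE] at ht
    exact ht.symm
  have hsurj : ∀ b, ∃ a, F (g a) b = 1 := by
    intro b
    obtain ⟨c, hc⟩ := hbij.2 (toClass F b)
    refine ⟨rep c, ?_⟩
    show F (rep (ϕ (toClass E (rep c)))) b = 1
    rw [toClass_rep c, hc, congrFun (E_rep_toClass F b) b]
    exact hF.refl b
  -- plain forms of the isomorphism conditions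
  have Iσ : ∀ a, scomp MA.σ E a = scomp MB.σ F (g a) := by
    intro a
    have h := hσ (toClass E a)
    simp only [factorAut] at h
    rw [scomp_congr hE MA.σ (E_rep_toClass E a)] at h
    exact h
  have Iτ0 : ∀ a, rscomp E MA.τ a = rscomp F MB.τ (g a) := by
    intro a
    have h := hτ (toClass E a)
    simp only [factorAut] at h
    rw [rscomp_congr (E_rep_toClass E a) MA.τ] at h
    exact h
  have Iδ0 : ∀ x a₁ a₂, rcomp (rcomp E (MA.δx x)) E a₁ a₂ =
      rcomp (rcomp F (MB.δx x)) F (g a₁) (g a₂) := by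
    intro x a₁ a₂
    have h := hδ (toClass E a₁) x (toClass E a₂)
    simp only [factorAut] at h
    rw [EdE_congr hE (MA.δx x) (E_rep_toClass E a₁) (E_rep_toClass E a₂)] at h
    exact h
  have Iδ : ∀ x a₁ a₂, rcomp (MA.δx x) E a₁ a₂ =
      rcomp F (MB.δx x) (g a₁) (g a₂) := by
    intro x a₁ a₂
    have h := Iδ0 x a₁ a₂
    rwa [fwd_EdE hE hEfb x, bwd_FdF hF hFbb x] at h
  have Iτ : ∀ a, MA.τ a = rscomp F MB.τ (g a) := by
    intro a
    have h := Iτ0 a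
    rwa [fwd_Etau hE hEfb] at h
  refine ⟨fun a b => F (g a) b, ⟨?_, ?_, ?_⟩, ⟨⟨?_, ?_, ?_⟩, ⟨?_, ?_, ?_⟩⟩, ?_, ?_⟩
  -- IsPFF
  · intro a b
    simp only [rcomp, inv]
    refine iSup_le fun a' => ?_
    rw [iSup_mul'']
    refine iSup_le fun b' => ?_
    have s1 : F (g a) b' * F (g a') b' ≤ F (g a) (g a') := by
      rw [hF.symm (g a') b']
      exact hF.trans _ _ _
    exact (mul_le_mul_r' s1 _).trans (hF.trans _ _ _)
  -- IsLFun
  · exact fun a => ⟨g a, hF.refl _⟩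
  -- IsSurj
  · exact hsurj
  -- Backward simulation: σ
  · intro b
    simp only [scomp]
    refine iSup_le fun a => ?_
    have s1 : MA.σ a ≤ scomp MA.σ E a :=
      le_iSup_of_le a (le_of_eq (by rw [hE.refl a, mul_one]))
    calc MA.σ a * F (g a) b
        ≤ scomp MA.σ E a * F (g a) b := mul_le_mul_r' s1 _
      _ = scomp MB.σ F (g a) * F (g a) b := by rw [Iσ a]
      _ ≤ MB.σ b := by
          simp only [scomp, iSup_mul'']
          refine iSup_le fun b' => ?_
          rw [mul_assoc]
          refine le_trans (mul_le_mul_l' (hF.trans b' (g a) b) _) ?_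
          exact le_trans (le_iSup (fun b'' => MB.σ b'' * F b'' b) b') (hFbb.1.1 b)
  -- Backward simulation: δ
  · intro x a b
    simp only [rcomp]
    refine iSup_le fun a' => ?_
    have s1 : MA.δx x a a' ≤ rcomp (MA.δx x) E a a' :=
      le_iSup_of_le a' (le_of_eq (by rw [hE.refl a', mul_one]))
    calc MA.δx x a a' * F (g a') b
        ≤ rcomp (MA.δx x) E a a' * F (g a') b := mul_le_mul_r' s1 _
      _ = rcomp F (MB.δx x) (g a) (g a') * F (g a') b := by rw [Iδ x a a']
      _ ≤ ⨆ b', F (g a) b' * MB.δx x b' b := by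
          simp only [rcomp, iSup_mul'']
          refine iSup_le fun b' => ?_
          rw [mul_assoc]
          have s2 : MB.δx x b' (g a') * F (g a') b ≤ rcomp F (MB.δx x) b' b :=
            le_trans (le_iSup_of_le (g a') le_rfl) (hFbb.1.2.1 x b' b)
          refine le_trans (mul_le_mul_l' s2 _) ?_
          simp only [rcomp, mul_iSup'']
          refine iSup_le fun b₂ => ?_
          rw [← mul_assoc]
          exact le_iSup_of_le b₂ (mul_le_mul_r' (hF.trans (g a) b' b₂) _)
  -- Backward simulation: τ
  · intro a
    exact le_of_eq (Iτ a)
  -- Forward simulation for the inverse: σ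
  · intro b
    show MB.σ b ≤ ⨆ a, MA.σ a * F (g a) b
    obtain ⟨a₀, ha₀⟩ := hsurj b
    have hb : F b (g a₀) = 1 := by rw [hF.symm]; exact ha₀
    have h1 : MB.σ b ≤ scomp MB.σ F (g a₀) :=
      le_iSup_of_le b (le_of_eq (by rw [hb, mul_one]))
    rw [← Iσ a₀] at h1
    refine h1.trans ?_
    refine iSup_le fun a' => ?_
    refine le_trans ?_ (le_iSup (fun a => MA.σ a * F (g a) b) a')
    refine mul_le_mul_l' ?_ _
    rw [← key a' a₀]
    calc F (g a') (g a₀) = F (g a') (g a₀) * F (g a₀) b := by rw [ha₀, mul_one]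
      _ ≤ F (g a') b := hF.trans _ _ _
  -- Forward simulation for the inverse: δ
  · intro x a b
    show (⨆ b', F (g a) b' * MB.δx x b' b) ≤ ⨆ a', MA.δx x a a' * F (g a') b
    obtain ⟨a₀, ha₀⟩ := hsurj b
    have hb : F b (g a₀) = 1 := by rw [hF.symm]; exact ha₀
    refine iSup_le fun b' => ?_
    have s1 : F (g a) b' * MB.δx x b' b ≤ rcomp F (MB.δx x) (g a) b :=
      le_iSup_of_le b' le_rfl
    have s2 : rcomp F (MB.δx x) (g a) b ≤ rcomp F (MB.δx x) (g a) (g a₀) := by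
      conv_rhs => rw [← bwd_FdF hF hFbb x]
      exact le_iSup_of_le b (le_of_eq (by rw [hb, mul_one]))
    have s3 : rcomp F (MB.δx x) (g a) (g a₀) = rcomp (MA.δx x) E a a₀ := (Iδ x a a₀).symm
    refine le_trans (s1.trans (s2.trans (le_of_eq s3))) ?_
    refine iSup_le fun a' => ?_
    refine le_trans ?_ (le_iSup (fun a'' => MA.δx x a a'' * F (g a'') b) a')
    refine mul_le_mul_l' ?_ _
    rw [← key a' a₀]
    calc F (g a') (g a₀) = F (g a') (g a₀) * F (g a₀) b := by rw [ha₀, mul_one]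
      _ ≤ F (g a') b := hF.trans _ _ _
  -- Forward simulation for the inverse: τ
  · intro a
    exact le_of_eq (Iτ a).symm
  -- kernel
  · funext a₁ a₂
    simp only [ker]
    rw [ker_classes hF]
    exact key a₁ a₂
  -- co-kernel
  · funext b₁ b₂
    simp only [coker]
    apply le_antisymm
    · obtain ⟨a, ha⟩ := hsurj b₁
      refine le_trans (iInf_le _ a) ?_
      rw [ha, bires_one_left']
      have hb : F b₁ (g a) = 1 := by rw [hF.symm]; exact ha
      calc F (g a) b₂ = F b₁ (g a) * F (g a) b₂ := by rw [hb, one_mul]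
        _ ≤ F b₁ b₂ := hF.trans _ _ _
    · refine le_iInf fun a => le_bires ?_ ?_
      · rw [mul_comm]; exact hF.trans _ _ _
      · rw [mul_comm, hF.symm b₁ b₂]; exact hF.trans _ _ _
lemma uniform_to_iso (MA : FuzzyAutomaton L X A) (MB : FuzzyAutomaton L X B)
    (E : A → A → L) (F : B → B → L)
    (hE : IsFuzzyEquiv E) (hEfb : IsForwardBisim MA MA E)
    (hF : IsFuzzyEquiv F) (hFbb : IsBackwardBisim MB MB F)
    (φ : A → B → L) (hu : IsUniform φ) (hbf : IsBFBisim MA MB φ)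
    (hker : ker φ = E) (hcok : coker φ = F) :
    ∃ ϕ : FactorSet E → FactorSet F,
        IsIso (factorAut MA E) (factorAut MB F) ϕ ∧
        ∀ a₁ a₂ : A,
          tildeRel E (toClass E a₁) (toClass E a₂) =
            tildeRel F (ϕ (toClass E a₁)) (ϕ (toClass E a₂)) := by
  obtain ⟨hpff, hlfun, hsurj⟩ := hu
  choose ψ hψ using hlfun
  have hψ2 : ∀ a b, φ a b = F (ψ a) b := by
    intro a b
    apply le_antisymm
    · rw [← hcok]
      simp only [coker]
      refine le_iInf fun a' => le_bires ?_ ?_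
      · calc φ a b * φ a' (ψ a)
            = (φ a' (ψ a) * φ a (ψ a)) * φ a b := by rw [hψ a, mul_one, mul_comm]
          _ ≤ rcomp φ (inv φ) a' a * φ a b :=
              mul_le_mul_r' (le_iSup (fun b' => φ a' b' * inv φ b' a) (ψ a)) _
          _ ≤ rcomp (rcomp φ (inv φ)) φ a' b := le_iSup_of_le a le_rfl
          _ ≤ φ a' b := hpff a' b
      · calc φ a b * φ a' b
            = (φ a' b * φ a b) * φ a (ψ a) := by rw [hψ a, mul_one, mul_comm]
          _ ≤ rcomp φ (inv φ) a' a * φ a (ψ a) :=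
              mul_le_mul_r' (le_iSup (fun b' => φ a' b' * inv φ b' a) b) _
          _ ≤ rcomp (rcomp φ (inv φ)) φ a' (ψ a) := le_iSup_of_le a le_rfl
          _ ≤ φ a' (ψ a) := hpff a' (ψ a)
    · rw [← hcok]
      simp only [coker]
      refine le_trans (iInf_le _ a) ?_
      rw [hψ a, bires_one_left']
  have hψ3 : ∀ a₁ a₂, E a₁ a₂ = F (ψ a₁) (ψ a₂) := by
    intro a₁ a₂
    rw [← hker]
    simp only [ker]
    calc (⨅ b, bires (φ a₁ b) (φ a₂ b)) = ⨅ b, bires (F (ψ a₁) b) (F (ψ a₂) b) :=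
          iInf_congr fun b => by rw [hψ2 a₁ b, hψ2 a₂ b]
      _ = F (ψ a₁) (ψ a₂) := ker_classes hF _ _
  have hψ4 : ∀ a a' b, φ a b * φ a' b ≤ E a a' := by
    intro a a' b
    rw [← hker]
    simp only [ker]
    refine le_iInf fun b' => le_bires ?_ ?_
    · calc (φ a b * φ a' b) * φ a b' = (φ a' b * φ a b) * φ a b' := by rw [mul_comm (φ a b)]
        _ ≤ rcomp φ (inv φ) a' a * φ a b' :=
            mul_le_mul_r' (le_iSup (fun y => φ a' y * inv φ y a) b) _
        _ ≤ rcomp (rcomp φ (inv φ)) φ a' b' := le_iSup_of_le a le_rfl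
        _ ≤ φ a' b' := hpff a' b'
    · calc (φ a b * φ a' b) * φ a' b'
          ≤ rcomp φ (inv φ) a a' * φ a' b' :=
            mul_le_mul_r' (le_iSup (fun y => φ a y * inv φ y a') b) _
        _ ≤ rcomp (rcomp φ (inv φ)) φ a b' := le_iSup_of_le a' le_rfl
        _ ≤ φ a b' := hpff a b'
  have hψ5 : ∀ b, ∃ a, F (ψ a) b = 1 := by
    intro b
    obtain ⟨a, ha⟩ := hsurj b
    exact ⟨a, by rw [← hψ2]; exact ha⟩
  obtain ⟨hbwd, hfwd⟩ := hbf
  have f1 : MB.σ ≤ scomp MA.σ φ := hfwd.1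
  have f2 : ∀ x, rcomp φ (MB.δx x) ≤ rcomp (MA.δx x) φ := fun x => hfwd.2.1 x
  have f3 : rscomp φ MB.τ ≤ MA.τ := hfwd.2.2
  have e1 : scomp MA.σ φ = MB.σ := le_antisymm hbwd.1 f1
  have e2 : ∀ x, rcomp (MA.δx x) φ = rcomp φ (MB.δx x) :=
    fun x => le_antisymm (hbwd.2.1 x) (f2 x)
  have e3 : MA.τ = rscomp φ MB.τ := le_antisymm hbwd.2.2 f3
  -- the induced map
  have hinj : Function.Injective
      (fun c : FactorSet E => toClass F (ψ (rep c))) := by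
    intro c c' hcc
    have h1 : F (ψ (rep c)) = F (ψ (rep c')) := congrArg Subtype.val hcc
    have h2 : F (ψ (rep c)) (ψ (rep c')) = 1 := by rw [h1]; exact hF.refl _
    have h3 : E (rep c) (rep c') = 1 := by rw [hψ3]; exact h2
    have h4 : E (rep c) = E (rep c') := hE.eq_of_one h3
    refine Subtype.ext ?_
    rw [← rep_spec c, ← rep_spec c', h4]
  have hsurjϕ : Function.Surjective
      (fun c : FactorSet E => toClass F (ψ (rep c))) := by
    intro d
    obtain ⟨a, ha⟩ := hψ5 (rep d)
    refine ⟨toClass E a, ?_⟩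
    have h1 : E (rep (toClass E a)) a = 1 := by
      rw [congrFun (E_rep_toClass E a) a]; exact hE.refl a
    have h2 : F (ψ (rep (toClass E a))) (ψ a) = 1 := by rw [← hψ3]; exact h1
    have h3 : F (ψ (rep (toClass E a))) = F (ψ a) := hF.eq_of_one h2
    have h4 : F (ψ a) = F (rep d) := hF.eq_of_one ha
    refine Subtype.ext ?_
    show F (ψ (rep (toClass E a))) = d.1
    rw [h3, h4, rep_spec d]
  have hrepϕ : ∀ c : FactorSet E,
      F (rep (toClass F (ψ (rep c)))) = F (ψ (rep c)) := fun c => rep_spec _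
  -- plain claims
  have claimσ : ∀ a, scomp MA.σ E a = scomp MB.σ F (ψ a) := by
    intro a
    apply le_antisymm
    · simp only [scomp]
      refine iSup_le fun a' => ?_
      have t1 : E a' a ≤ φ a' (ψ a) := by
        rw [hψ3 a' a, ← hψ2 a' (ψ a)]
      calc MA.σ a' * E a' a ≤ MA.σ a' * φ a' (ψ a) := mul_le_mul_l' t1 _
        _ ≤ scomp MA.σ φ (ψ a) := le_iSup (fun a'' => MA.σ a'' * φ a'' (ψ a)) a'
        _ = MB.σ (ψ a) := by rw [e1]
        _ ≤ ⨆ b, MB.σ b * F b (ψ a) :=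
            le_iSup_of_le (ψ a) (le_of_eq (by rw [hF.refl, mul_one]))
    · simp only [scomp]
      refine iSup_le fun b => ?_
      have t2 : MB.σ b = ⨆ a', MA.σ a' * φ a' b := (congrFun e1 b).symm
      rw [t2, iSup_mul'']
      refine iSup_le fun a' => ?_
      have t3 : φ a' b * F b (ψ a) ≤ E a' a := by
        rw [hF.symm b (ψ a), ← hψ2 a b]
        exact hψ4 a' a b
      rw [mul_assoc]
      exact le_iSup_of_le a' (mul_le_mul_l' t3 _)
  have claimτ : ∀ a, MA.τ a = rscomp F MB.τ (ψ a) := by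
    intro a
    rw [e3]
    simp only [rscomp]
    exact iSup_congr fun b => by rw [hψ2 a b]
  have claimδ : ∀ x a a', rcomp (MA.δx x) E a a' = rcomp F (MB.δx x) (ψ a) (ψ a') := by
    intro x a a'
    apply le_antisymm
    · simp only [rcomp]
      refine iSup_le fun a₁ => ?_
      have t1 : MA.δx x a a₁ ≤ rcomp φ (MB.δx x) a (ψ a₁) := by
        rw [← e2 x]
        exact le_iSup_of_le a₁ (le_of_eq (by rw [hψ a₁, mul_one]))
      refine le_trans (mul_mono' t1 (le_of_eq (hψ3 a₁ a'))) ?_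
      simp only [rcomp, iSup_mul'']
      refine iSup_le fun b => ?_
      rw [mul_assoc]
      have t3 : MB.δx x b (ψ a₁) * F (ψ a₁) (ψ a') ≤ rcomp F (MB.δx x) b (ψ a') :=
        le_trans (le_iSup_of_le (ψ a₁) le_rfl) (hFbb.1.2.1 x b (ψ a'))
      refine le_trans (mul_le_mul_l' t3 _) ?_
      simp only [rcomp, mul_iSup'']
      refine iSup_le fun b₂ => ?_
      rw [← mul_assoc]
      refine le_iSup_of_le b₂ (mul_le_mul_r' ?_ _)
      rw [hψ2 a b]
      exact hF.trans _ _ _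
    · simp only [rcomp]
      refine iSup_le fun b => ?_
      have t1 : F (ψ a) b * MB.δx x b (ψ a') ≤ rcomp φ (MB.δx x) a (ψ a') := by
        rw [← hψ2 a b]
        exact le_iSup_of_le b le_rfl
      refine le_trans t1 ?_
      rw [← e2 x]
      simp only [rcomp]
      refine iSup_le fun a₁ => ?_
      refine le_iSup_of_le a₁ (mul_le_mul_l' ?_ _)
      rw [hψ2 a₁ (ψ a'), hψ3 a₁ a']
  refine ⟨fun c => toClass F (ψ (rep c)), ⟨⟨hinj, hsurjϕ⟩, ?_, ?_, ?_⟩, ?_⟩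
  · intro c x c'
    simp only [factorAut]
    have h := claimδ x (rep c) (rep c')
    rw [← fwd_EdE hE hEfb x, ← bwd_FdF hF hFbb x] at h
    rw [h]
    exact (EdE_congr hF (MB.δx x) (hrepϕ c) (hrepϕ c')).symm
  · intro c
    simp only [factorAut]
    rw [claimσ (rep c)]
    exact (scomp_congr hF MB.σ (hrepϕ c)).symm
  · intro c
    simp only [factorAut]
    rw [fwd_Etau hE hEfb, claimτ (rep c)]
    exact (rscomp_congr (hrepϕ c) MB.τ).symm
  · intro a₁ a₂
    unfold tildeRel
    rw [E_rep_rep hE]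
    show E a₁ a₂ = F (rep (toClass F (ψ (rep (toClass E a₁)))))
        (rep (toClass F (ψ (rep (toClass E a₂)))))
    rw [congrFun (hrepϕ (toClass E a₁)) (rep (toClass F (ψ (rep (toClass E a₂)))))]
    rw [hF.symm (ψ (rep (toClass E a₁))) (rep (toClass F (ψ (rep (toClass E a₂)))))]
    rw [congrFun (hrepϕ (toClass E a₂)) (ψ (rep (toClass E a₁)))]
    rw [hF.symm (ψ (rep (toClass E a₂))) (ψ (rep (toClass E a₁)))]
    rw [← hψ3 (rep (toClass E a₁)) (rep (toClass E a₂))]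
    exact (E_rep_rep hE a₁ a₂).symm
/-- existence of a uniform backward-forward bisimulation with given
kernel and co-kernel -/
theorem exists_uniform_bfBisim_iff {L X A B : Type*} [CompleteResiduatedLattice L]
    [Nonempty A] [Nonempty B]
    (MA : FuzzyAutomaton L X A) (MB : FuzzyAutomaton L X B)
    (E : A → A → L) (F : B → B → L)
    (hE : IsFuzzyEquiv E) (hEfb : IsForwardBisim MA MA E)
    (hF : IsFuzzyEquiv F) (hFbb : IsBackwardBisim MB MB F) :
    (∃ φ : A → B → L, IsUniform φ ∧ IsBFBisim MA MB φ ∧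
        ker φ = E ∧ coker φ = F) ↔
    (∃ ϕ : FactorSet E → FactorSet F,
        IsIso (factorAut MA E) (factorAut MB F) ϕ ∧
        ∀ a₁ a₂ : A,
          tildeRel E (toClass E a₁) (toClass E a₂) =
            tildeRel F (ϕ (toClass E a₁)) (ϕ (toClass E a₂))) := by
  constructor
  · rintro ⟨φ, hu, hbf, hker, hcok⟩
    exact uniform_to_iso MA MB E F hE hEfb hF hFbb φ hu hbf hker hcok
  · rintro ⟨ϕ, hiso, htilde⟩
    exact iso_to_uniform MA MB E F hE hEfb hF hFbb ϕ hiso htilde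

end FuzzyAutomataBisim
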